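/- arXiv:1711.07892 — 6 statements merged into one kernel-verified Lean document; each statement's English description precedes it below -/
import Mathlib

section
/- Let X be a complex Banach space, let g : [0,∞) → X be locally Bochner integrable, let x > 0 and C > 0, and suppose that ‖e^{-xt} ∫₀ᵗ e^{xs} g(s) ds‖ ≤ C for every t ≥ 0. Then for every y ∈ ℝ, writing z = x + iy, one has ‖e^{-xt} ∫₀ᵗ e^{zs} g(s) ds‖ ≤ C(1 + |y|/x) for every t ≥ 0. -/
/-!
Put `h s = e^{xs} g s` and `F u = ∫₀ᵘ h`, so that the hypothesis reads `‖F u‖ ≤ C e^{xu}`.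
Since `e^{zs} g s = e^{iys} h s`, integrating by parts against the primitive `F` (Fubini on the
triangle `0 < s < u ≤ t`) gives
`∫₀ᵗ e^{zs} g s ds = e^{iyt} F t - iy ∫₀ᵗ e^{iyu} F u du`,
and the last term has norm at most `|y| C (e^{xt} - 1) / x`.
-/

open MeasureTheory Set

theorem setIntegral_Ioc_exp_mul {x : ℝ} (hx : x ≠ 0) {t : ℝ} (ht : 0 ≤ t) :
    ∫ u in Ioc 0 t, Real.exp (x * u) = (Real.exp (x * t) - 1) / x := by
  rw [← intervalIntegral.integral_of_le ht,
    intervalIntegral.integral_comp_mul_left (fun u => Real.exp u) hx, integral_exp, mul_zero,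
    Real.exp_zero, smul_eq_mul, inv_mul_eq_div]

section

variable {𝕜 X : Type*} [RCLike 𝕜] [NormedAddCommGroup X] [NormedSpace ℝ X] [NormedSpace 𝕜 X]

theorem setIntegral_Ioc_setIntegral_Ioc_smul_swap {f : ℝ → 𝕜} {h : ℝ → X} {a b : ℝ}
    (hf : IntegrableOn f (Ioc a b)) (hh : IntegrableOn h (Ioc a b)) :
    ∫ s in Ioc a b, ∫ u in Ioc s b, f u • h s = ∫ u in Ioc a b, f u • ∫ s in Ioc a u, h s := by
  set K : ℝ → ℝ → X := fun s u =>
    {p : ℝ × ℝ | p.1 < p.2}.indicator (fun p => f p.2 • h p.1) (s, u)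
  have hK : Integrable (Function.uncurry K)
      ((volume.restrict (Ioc a b)).prod (volume.restrict (Ioc a b))) :=
    (hf.smul_prod hh).swap.indicator (measurableSet_lt measurable_fst measurable_snd)
  calc ∫ s in Ioc a b, ∫ u in Ioc s b, f u • h s
      = ∫ s in Ioc a b, ∫ u in Ioc a b, K s u := by
        refine setIntegral_congr_fun measurableSet_Ioc fun s hs => ?_
        have hslice : Ioc a b ∩ Ioi s = Ioc s b := by rw [Ioc_inter_Ioi, max_eq_right hs.1.le]
        rw [← hslice, ← setIntegral_indicator measurableSet_Ioi]
        rfl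
    _ = ∫ u in Ioc a b, ∫ s in Ioc a b, K s u := integral_integral_swap hK
    _ = ∫ u in Ioc a b, f u • ∫ s in Ioc a u, h s := by
        refine setIntegral_congr_fun measurableSet_Ioc fun u hu => ?_
        have hslice : Ioc a b ∩ Iio u = Ioo a u := by
          ext s
          simp only [mem_inter_iff, mem_Ioc, mem_Iio, mem_Ioo]
          exact ⟨fun hs => ⟨hs.1.1, hs.2⟩, fun hs => ⟨⟨hs.1, hs.2.le.trans hu.2⟩, hs.2⟩⟩
        rw [← integral_smul, integral_Ioc_eq_integral_Ioo (x := a) (y := u), ← hslice,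
          ← setIntegral_indicator measurableSet_Iio]
        rfl

theorem setIntegral_Ioc_smul_eq_smul_integral_sub [CompleteSpace X] {φ φ' : ℝ → 𝕜} {h : ℝ → X}
    {a b : ℝ} (hφ : ∀ u ∈ Icc a b, HasDerivAt φ (φ' u) u) (hφ' : IntegrableOn φ' (Ioc a b))
    (hh : IntegrableOn h (Ioc a b)) :
    ∫ s in Ioc a b, φ s • h s
      = φ b • (∫ s in Ioc a b, h s) - ∫ u in Ioc a b, φ' u • ∫ s in Ioc a u, h s := by
  have hFTC : ∀ s ∈ Ioc a b, ∫ u in Ioc s b, φ' u • h s = (φ b - φ s) • h s := by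
    intro s hs
    rw [integral_smul_const, ← intervalIntegral.integral_of_le hs.2]
    refine congrArg (· • h s) (intervalIntegral.integral_eq_sub_of_hasDerivAt (fun u hu => ?_) ?_)
    · rw [uIcc_of_le hs.2] at hu
      exact hφ u ⟨hs.1.le.trans hu.1, hu.2⟩
    · exact (intervalIntegrable_iff_integrableOn_Ioc_of_le hs.2).2
        (hφ'.mono_set (Ioc_subset_Ioc_left hs.1.le))
  have hφh : IntegrableOn (fun s => φ s • h s) (Ioc a b) :=
    hh.continuousOn_smul_of_subset (fun u hu => (hφ u hu).continuousAt.continuousWithinAt)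
      isCompact_Icc measurableSet_Ioc Ioc_subset_Icc_self
  have hconst : IntegrableOn (fun s => φ b • h s) (Ioc a b) := hh.smul (φ b)
  have hinner : IntegrableOn (fun s => ∫ u in Ioc s b, φ' u • h s) (Ioc a b) :=
    (hconst.sub hφh).congr_fun (fun s hs => by rw [hFTC s hs, sub_smul]; rfl) measurableSet_Ioc
  calc ∫ s in Ioc a b, φ s • h s
      = ∫ s in Ioc a b, (φ b • h s - ∫ u in Ioc s b, φ' u • h s) :=
        setIntegral_congr_fun measurableSet_Ioc fun s hs => by
          rw [hFTC s hs, sub_smul, sub_sub_cancel]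
    _ = φ b • (∫ s in Ioc a b, h s) - ∫ u in Ioc a b, φ' u • ∫ s in Ioc a u, h s := by
        rw [integral_sub hconst hinner, integral_smul,
          setIntegral_Ioc_setIntegral_Ioc_smul_swap hφ' hh]

theorem norm_setIntegral_Ioc_smul_le_of_norm_le_exp {ψ : ℝ → 𝕜} {F : ℝ → X} {x t M C : ℝ}
    (hx : x ≠ 0) (ht : 0 ≤ t) (hψ : ∀ u, ‖ψ u‖ ≤ M)
    (hF : ∀ u ∈ Ioc 0 t, ‖F u‖ ≤ C * Real.exp (x * u)) :
    ‖∫ u in Ioc 0 t, ψ u • F u‖ ≤ M * C * ((Real.exp (x * t) - 1) / x) := by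
  rw [← setIntegral_Ioc_exp_mul hx ht, ← integral_const_mul]
  refine norm_integral_le_of_norm_le (by fun_prop : Continuous _).integrableOn_Ioc
    (ae_restrict_of_forall_mem measurableSet_Ioc fun u hu => ?_)
  rw [norm_smul, mul_assoc]
  exact mul_le_mul (hψ u) (hF u hu) (norm_nonneg _) ((norm_nonneg _).trans (hψ u))

end

theorem hasDerivAt_cexp_mul_ofReal (c : ℂ) (u : ℝ) :
    HasDerivAt (fun u : ℝ => Complex.exp (c * u)) (c * Complex.exp (c * u)) u := by
  simpa only [mul_one, mul_comm (Complex.exp _)] using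
    ((hasDerivAt_id' (u : ℂ)).const_mul c).cexp.comp_ofReal

theorem exp_neg_mul_norm_setIntegral_cexp_mul_I_smul_le {X : Type*} [NormedAddCommGroup X]
    [NormedSpace ℂ X] [CompleteSpace X] {h : ℝ → X} {x C t : ℝ} (y : ℝ) (hx : 0 < x)
    (hC : 0 ≤ C) (ht : 0 ≤ t) (hh : IntegrableOn h (Ioc 0 t))
    (hbound : ∀ u ∈ Icc 0 t, Real.exp (-x * u) * ‖∫ s in Ioc 0 u, h s‖ ≤ C) :
    Real.exp (-x * t) * ‖∫ s in Ioc 0 t, Complex.exp (y * Complex.I * s) • h s‖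
      ≤ C * (1 + |y| / x) := by
  set F : ℝ → X := fun u => ∫ s in Ioc 0 u, h s
  set φ' : ℝ → ℂ := fun u => y * Complex.I * Complex.exp (y * Complex.I * u)
  have hcexp_norm : ∀ u : ℝ, ‖Complex.exp (y * Complex.I * u)‖ = 1 := fun u => by
    simp [Complex.norm_exp]
  have hF_exp : ∀ u ∈ Ioc 0 t, ‖F u‖ ≤ C * Real.exp (x * u) := fun u hu => by
    have := hbound u (Ioc_subset_Icc_self hu)
    rwa [neg_mul, Real.exp_neg, inv_mul_le_iff₀ (Real.exp_pos _), mul_comm] at this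
  have hrest : ‖∫ u in Ioc 0 t, φ' u • F u‖ ≤ |y| * C * ((Real.exp (x * t) - 1) / x) :=
    norm_setIntegral_Ioc_smul_le_of_norm_le_exp hx.ne' ht
      (fun u => by simp [φ', hcexp_norm]) hF_exp
  rw [setIntegral_Ioc_smul_eq_smul_integral_sub
    (fun u _ => hasDerivAt_cexp_mul_ofReal _ u) (by fun_prop : Continuous φ').integrableOn_Ioc hh]
  calc Real.exp (-x * t) * ‖Complex.exp (y * Complex.I * t) • F t - ∫ u in Ioc 0 t, φ' u • F u‖
      ≤ Real.exp (-x * t) * (‖F t‖ + |y| * C * ((Real.exp (x * t) - 1) / x)) := by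
        gcongr
        refine (norm_sub_le _ _).trans ?_
        rw [norm_smul, hcexp_norm, one_mul]
        exact add_le_add_right hrest _
    _ = Real.exp (-x * t) * ‖F t‖ + C * (|y| / x) * (1 - Real.exp (-x * t)) := by
        rw [neg_mul, Real.exp_neg]; field_simp
    _ ≤ C + C * (|y| / x) := by
        refine add_le_add (hbound t ⟨ht, le_rfl⟩) (mul_le_of_le_one_right (by positivity) ?_)
        linarith [Real.exp_pos (-x * t)]
    _ = C * (1 + |y| / x) := by ring

theorem stmt_0 {X : Type*} [NormedAddCommGroup X] [NormedSpace ℂ X] [CompleteSpace X]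
    (g : ℝ → X) (hg : LocallyIntegrableOn g (Set.Ici 0))
    (x C : ℝ) (hx : 0 < x) (hC : 0 < C)
    (hbound : ∀ t : ℝ, 0 ≤ t →
      ‖Real.exp (-x * t) • ∫ s in Set.Ioc (0 : ℝ) t, Real.exp (x * s) • g s‖ ≤ C) :
    ∀ y : ℝ, ∀ t : ℝ, 0 ≤ t →
      ‖Real.exp (-x * t) •
          ∫ s in Set.Ioc (0 : ℝ) t, Complex.exp (((x : ℂ) + y * Complex.I) * s) • g s‖
        ≤ C * (1 + |y| / x) := by
  intro y t ht
  have hh : IntegrableOn (fun s => Real.exp (x * s) • g s) (Ioc 0 t) :=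
    ((hg.integrableOn_compact_subset Icc_subset_Ici_self isCompact_Icc).continuousOn_smul
      (by fun_prop) isCompact_Icc).mono_set Ioc_subset_Icc_self
  have hsplit : ∀ s : ℝ, Complex.exp (((x : ℂ) + y * Complex.I) * s) • g s
      = Complex.exp (y * Complex.I * s) • Real.exp (x * s) • g s := fun s => by
    rw [← Complex.coe_smul, smul_smul, Complex.ofReal_exp, ← Complex.exp_add]
    push_cast; ring_nf
  simp only [hsplit, norm_smul, Real.norm_of_nonneg (Real.exp_pos _).le] at hbound ⊢
  exact exp_neg_mul_norm_setIntegral_cexp_mul_I_smul_le y hx hC.le ht hh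
    fun u hu => hbound u hu.1
end

section
/- Let X be a complex Banach space, let g : [0,∞) → X be locally Bochner integrable, let x > 0 and C > 0, and suppose that ‖e^{-xt} ∫₀ᵗ e^{xs} g(s) ds‖ ≤ C for every t ≥ 0. Then for every y ∈ ℝ, writing z = x + iy, for every t ≥ 0 the improper integral ∫_t^∞ e^{-zs} g(s) ds exists (i.e. the limit of ∫_t^v e^{-zs} g(s) ds as v → ∞ exists in X), and ‖e^{xt} ∫_t^∞ e^{-zs} g(s) ds‖ ≤ C(3 + |y|/x) for every t ≥ 0. -/
/-!
Put `h s = e^{xs} • g s` and `G u = ∫_0^u h`, so that the hypothesis reads `‖G u‖ ≤ C e^{xu}`.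
With `w = z + x`, integration by parts gives
`∫_t^v e^{-zs} • g s ds = e^{-wv} • G v - e^{-wt} • G t + w • ∫_t^v e^{-wu} • G u du`.
Since `Re w = 2x`, the term at `v` decays like `C e^{-xv}` and the last integrand is bounded
by `C e^{-xu}`, which gives the limit and the bound
`C e^{-xt} (1 + |w| / x) ≤ C e^{-xt} (3 + |y| / x)`.
As `G` is only absolutely continuous and vector-valued, the integration by parts is proved by
Fubini on the triangle `a < s < u ≤ b`.
-/

open MeasureTheory Filter Set Topology

section Primitive

variable {E : Type*} [NormedAddCommGroup E] [NormedSpace ℝ E]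

theorem MeasureTheory.LocallyIntegrableOn.continuousOn_primitive_Ioc {f : ℝ → E} {a : ℝ}
    (hf : LocallyIntegrableOn f (Ici a)) :
    ContinuousOn (fun u ↦ ∫ s in Ioc a u, f s) (Ici a) := by
  intro u hu
  have hf' : IntegrableOn f (Icc a (u + 1)) :=
    hf.integrableOn_compact_subset Icc_subset_Ici_self isCompact_Icc
  exact ((intervalIntegral.continuousOn_primitive hf') u ⟨hu, by linarith⟩).mono_of_mem_nhdsWithin
    (inter_mem_nhdsWithin (Ici a) (Iic_mem_nhds (lt_add_one u)))

variable [CompleteSpace E]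

theorem integral_Ioc_eq_sub_of_hasDerivAt_of_le {f f' : ℝ → E} {a b : ℝ} (hab : a ≤ b)
    (hf : ∀ u ∈ Icc a b, HasDerivAt f (f' u) u) (hf' : ContinuousOn f' (Icc a b)) :
    ∫ u in Ioc a b, f' u = f b - f a := by
  rw [← intervalIntegral.integral_of_le hab]
  exact intervalIntegral.integral_eq_sub_of_hasDerivAt (fun u hu ↦ hf u (uIcc_of_le hab ▸ hu))
    (hf'.intervalIntegrable_of_Icc hab)

variable {𝕜 : Type*} [RCLike 𝕜] [NormedSpace 𝕜 E]

theorem integral_Ioc_smul_integral_Ioc_swap {k : ℝ → 𝕜} {h : ℝ → E} {a b : ℝ}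
    (hk : IntegrableOn k (Ioc a b)) (hh : IntegrableOn h (Ioc a b)) :
    ∫ u in Ioc a b, k u • ∫ s in Ioc a u, h s =
      ∫ s in Ioc a b, (∫ u in Ioc s b, k u) • h s := by
  set μ := volume.restrict (Ioc a b)
  have hF : Integrable (Function.uncurry fun u s ↦ (Iio u).indicator (fun s ↦ k u • h s) s)
      (μ.prod μ) :=
    (hk.smul_prod hh).indicator (measurableSet_lt measurable_snd measurable_fst)
  refine (setIntegral_congr_fun measurableSet_Ioc fun u hu ↦ ?_).trans
    ((integral_integral_swap hF).trans (setIntegral_congr_fun measurableSet_Ioc fun s hs ↦ ?_))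
  · have hIoo : Iio u ∩ Ioc a b = Ioo a u :=
      ext fun s ↦ ⟨fun hs ↦ ⟨hs.2.1, hs.1⟩, fun hs ↦ ⟨hs.2, hs.1, hs.2.le.trans hu.2⟩⟩
    rw [integral_indicator measurableSet_Iio, Measure.restrict_restrict measurableSet_Iio, hIoo,
      integral_smul, integral_Ioc_eq_integral_Ioo]
  · change ∫ u, (Ioi s).indicator (fun u ↦ k u • h s) u ∂μ = _
    rw [integral_indicator measurableSet_Ioi, Measure.restrict_restrict measurableSet_Ioi,
      integral_smul_const, inter_comm, Ioc_inter_Ioi, max_eq_right hs.1.le]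

theorem integral_Ioc_smul_eq_smul_integral_sub_integral_deriv_smul {φ φ' : ℝ → 𝕜} {h : ℝ → E}
    {a b : ℝ} (hφ : ∀ u ∈ Icc a b, HasDerivAt φ (φ' u) u) (hφ' : ContinuousOn φ' (Icc a b))
    (hh : IntegrableOn h (Ioc a b)) :
    ∫ s in Ioc a b, φ s • h s =
      φ b • (∫ s in Ioc a b, h s) - ∫ u in Ioc a b, φ' u • ∫ s in Ioc a u, h s := by
  have hφc : ContinuousOn φ (Icc a b) := fun u hu ↦ (hφ u hu).continuousAt.continuousWithinAt
  have hftc : ∀ s ∈ Ioc a b, φ b - φ s = ∫ u in Ioc s b, φ' u := fun s hs ↦ by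
    have hsub : Icc s b ⊆ Icc a b := Icc_subset_Icc hs.1.le le_rfl
    rw [integral_Ioc_eq_sub_of_hasDerivAt_of_le hs.2 (fun u hu ↦ hφ u (hsub hu)) (hφ'.mono hsub)]
  have hrest : IntegrableOn (fun s ↦ (φ b - φ s) • h s) (Ioc a b) :=
    hh.continuousOn_smul_of_subset (continuousOn_const.sub hφc) isCompact_Icc
      measurableSet_Ioc Ioc_subset_Icc_self
  calc ∫ s in Ioc a b, φ s • h s
      = ∫ s in Ioc a b, (φ b • h s - (φ b - φ s) • h s) := by
        congr 1 with s
        rw [sub_smul, sub_sub_cancel]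
    _ = φ b • (∫ s in Ioc a b, h s) - ∫ s in Ioc a b, (∫ u in Ioc s b, φ' u) • h s := by
        rw [integral_sub (f := fun s ↦ φ b • h s) (hh.smul (φ b)) hrest, integral_smul]
        congr 1
        exact setIntegral_congr_fun measurableSet_Ioc fun s hs ↦ by rw [hftc s hs]
    _ = _ := by
        rw [integral_Ioc_smul_integral_Ioc_swap (hφ'.integrableOn_Icc.mono_set Ioc_subset_Icc_self)
          hh]

theorem integral_Ioc_smul_eq_sub_integral_deriv_smul {φ φ' : ℝ → 𝕜} {h G : ℝ → E} {a b : ℝ}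
    (hab : a ≤ b) (hφ : ∀ u ∈ Icc a b, HasDerivAt φ (φ' u) u) (hφ' : ContinuousOn φ' (Icc a b))
    (hh : IntegrableOn h (Ioc a b)) (hG : ∀ u ∈ Icc a b, G u = G a + ∫ s in Ioc a u, h s) :
    ∫ s in Ioc a b, φ s • h s = φ b • G b - φ a • G a - ∫ u in Ioc a b, φ' u • G u := by
  have hGc : ContinuousOn G (Icc a b) :=
    (continuousOn_const.add (intervalIntegral.continuousOn_primitive
      ((integrableOn_Icc_iff_integrableOn_Ioc).2 hh))).congr hG
  have hφ'G : IntegrableOn (fun u ↦ φ' u • G u) (Ioc a b) :=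
    ((hφ'.smul hGc).integrableOn_Icc).mono_set Ioc_subset_Icc_self
  have hφ'Ga : IntegrableOn (fun u ↦ φ' u • G a) (Ioc a b) :=
    ((hφ'.smul continuousOn_const).integrableOn_Icc).mono_set Ioc_subset_Icc_self
  have hprim : ∀ u ∈ Ioc a b, φ' u • ∫ s in Ioc a u, h s = φ' u • G u - φ' u • G a :=
    fun u hu ↦ by rw [hG u (Ioc_subset_Icc_self hu), smul_add, add_sub_cancel_left]
  rw [integral_Ioc_smul_eq_smul_integral_sub_integral_deriv_smul hφ hφ' hh,
    setIntegral_congr_fun measurableSet_Ioc hprim, integral_sub hφ'G hφ'Ga, integral_smul_const,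
    integral_Ioc_eq_sub_of_hasDerivAt_of_le hab hφ hφ', hG b (right_mem_Icc.2 hab)]
  simp only [smul_add, sub_smul]
  abel

end Primitive

theorem integrableOn_Ioi_of_norm_le_exp {E : Type*} [NormedAddCommGroup E] {F : ℝ → E}
    {C x t : ℝ} (hx : 0 < x) (hF : AEStronglyMeasurable F (volume.restrict (Ioi t)))
    (hle : ∀ u ∈ Ioi t, ‖F u‖ ≤ C * Real.exp (-x * u)) : IntegrableOn F (Ioi t) :=
  ((exp_neg_integrableOn_Ioi t hx).const_mul C).mono' hF
    (ae_restrict_of_forall_mem measurableSet_Ioi hle)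

theorem norm_integral_Ioi_le_of_norm_le_exp {E : Type*} [NormedAddCommGroup E] [NormedSpace ℝ E]
    {F : ℝ → E} {C x t : ℝ} (hx : 0 < x) (hle : ∀ u ∈ Ioi t, ‖F u‖ ≤ C * Real.exp (-x * u)) :
    ‖∫ u in Ioi t, F u‖ ≤ C * Real.exp (-x * t) / x := by
  calc ‖∫ u in Ioi t, F u‖ ≤ ∫ u in Ioi t, C * Real.exp (-x * u) :=
        norm_integral_le_of_norm_le ((exp_neg_integrableOn_Ioi t hx).const_mul C)
          (ae_restrict_of_forall_mem measurableSet_Ioi hle)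
    _ = C * Real.exp (-x * t) / x := by
        rw [integral_const_mul, integral_exp_mul_Ioi (neg_lt_zero.2 hx), neg_div_neg_eq,
          mul_div_assoc]

section Laplace

variable {X : Type*} [NormedAddCommGroup X] [NormedSpace ℂ X] [CompleteSpace X]

theorem integral_Ioc_cexp_smul_eq {h G : ℝ → X} {w : ℂ} {a b : ℝ} (hab : a ≤ b)
    (hh : IntegrableOn h (Ioc a b)) (hG : ∀ u ∈ Icc a b, G u = G a + ∫ s in Ioc a u, h s) :
    ∫ s in Ioc a b, Complex.exp (-w * s) • h s =
      Complex.exp (-w * b) • G b - Complex.exp (-w * a) • G a +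
        w • ∫ u in Ioc a b, Complex.exp (-w * u) • G u := by
  have hφ : ∀ u ∈ Icc a b, HasDerivAt (fun s : ℝ ↦ Complex.exp (-w * s))
      (-w * Complex.exp (-w * u)) u := fun u _ ↦ by
    simpa [mul_comm] using ((hasDerivAt_id (u : ℂ)).const_mul (-w)).cexp.comp_ofReal
  rw [integral_Ioc_smul_eq_sub_integral_deriv_smul hab hφ (by fun_prop) hh hG]
  simp_rw [mul_smul]
  rw [integral_smul, neg_smul, sub_neg_eq_add]

theorem exists_tendsto_integral_Ioc_cexp_smul {h : ℝ → X} {C x t : ℝ} {w : ℂ}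
    (hh : LocallyIntegrableOn h (Ici 0)) (hxw : x < w.re)
    (hG : ∀ u, 0 ≤ u → ‖∫ s in Ioc 0 u, h s‖ ≤ C * Real.exp (x * u)) (ht : 0 ≤ t) :
    ∃ L : X, Tendsto (fun v ↦ ∫ s in Ioc t v, Complex.exp (-w * s) • h s) atTop (𝓝 L) ∧
      ‖L‖ ≤ C * (1 + ‖w‖ / (w.re - x)) * Real.exp (-(w.re - x) * t) := by
  set G : ℝ → X := fun u ↦ ∫ s in Ioc 0 u, h s
  set F : ℝ → X := fun u ↦ Complex.exp (-w * u) • G u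
  have hδ : 0 < w.re - x := sub_pos.2 hxw
  have hh_Ioc : ∀ a b, 0 ≤ a → IntegrableOn h (Ioc a b) := fun a b ha ↦
    (hh.integrableOn_compact_subset (fun s hs ↦ ha.trans hs.1) isCompact_Icc).mono_set
      Ioc_subset_Icc_self
  have hG_add : ∀ u, t ≤ u → G u = G t + ∫ s in Ioc t u, h s := fun u hu ↦ by
    rw [← setIntegral_union (Ioc_disjoint_Ioc_of_le le_rfl) measurableSet_Ioc (hh_Ioc 0 t le_rfl)
      (hh_Ioc t u ht), Ioc_union_Ioc_eq_Ioc ht hu]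
  have hF_le : ∀ u ∈ Ici t, ‖F u‖ ≤ C * Real.exp (-(w.re - x) * u) := fun u hu ↦
    calc ‖F u‖ = Real.exp (-w.re * u) * ‖G u‖ := by simp [F, norm_smul, Complex.norm_exp]
      _ ≤ Real.exp (-w.re * u) * (C * Real.exp (x * u)) := by gcongr; exact hG u (ht.trans hu)
      _ = C * Real.exp (-(w.re - x) * u) := by rw [mul_left_comm, ← Real.exp_add]; ring_nf
  have hF_int : IntegrableOn F (Ioi t) := by
    refine integrableOn_Ioi_of_norm_le_exp hδ (ContinuousOn.aestronglyMeasurable ?_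
      measurableSet_Ioi) fun u hu ↦ hF_le u (mem_Ici_of_Ioi hu)
    exact (Continuous.continuousOn (by fun_prop)).smul
      (hh.continuousOn_primitive_Ioc.mono fun u hu ↦ ht.trans (le_of_lt hu))
  have hF_lim : Tendsto F atTop (𝓝 0) := by
    refine squeeze_zero_norm' ((eventually_ge_atTop t).mono hF_le) ?_
    simpa using (Real.tendsto_exp_atBot.comp
      (tendsto_id.const_mul_atTop_of_neg (neg_lt_zero.2 hδ))).const_mul C
  have hJ_lim : Tendsto (fun v ↦ ∫ u in Ioc t v, F u) atTop (𝓝 (∫ u in Ioi t, F u)) :=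
    (intervalIntegral_tendsto_integral_Ioi t hF_int tendsto_id).congr'
      ((eventually_ge_atTop t).mono fun v hv ↦ intervalIntegral.integral_of_le hv)
  refine ⟨-F t + w • ∫ u in Ioi t, F u, ?_, ?_⟩
  · refine (by simpa only [zero_sub] using (hF_lim.sub_const (F t)).add (hJ_lim.const_smul w)
      : Tendsto _ atTop _).congr' ((eventually_ge_atTop t).mono fun v hv ↦ ?_)
    exact (integral_Ioc_cexp_smul_eq hv (hh_Ioc t v ht) fun u hu ↦ hG_add u hu.1).symm
  · have hJ_le := norm_integral_Ioi_le_of_norm_le_exp hδ fun u hu ↦ hF_le u (mem_Ici_of_Ioi hu)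
    calc ‖-F t + w • ∫ u in Ioi t, F u‖ ≤ ‖F t‖ + ‖w‖ * ‖∫ u in Ioi t, F u‖ := by
          simpa [norm_smul] using norm_add_le (-F t) (w • ∫ u in Ioi t, F u)
      _ ≤ C * Real.exp (-(w.re - x) * t) +
            ‖w‖ * (C * Real.exp (-(w.re - x) * t) / (w.re - x)) := by
          gcongr
          exact hF_le t self_mem_Ici
      _ = C * (1 + ‖w‖ / (w.re - x)) * Real.exp (-(w.re - x) * t) := by ring

end Laplace

theorem stmt_1_general {X : Type*} [NormedAddCommGroup X] [NormedSpace ℂ X] [CompleteSpace X]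
    (g : ℝ → X) (hg : LocallyIntegrableOn g (Set.Ici 0))
    (x C : ℝ) (hx : 0 < x)
    (hbound : ∀ t : ℝ, 0 ≤ t →
      ‖Real.exp (-x * t) • ∫ s in Set.Ioc (0 : ℝ) t, Real.exp (x * s) • g s‖ ≤ C) :
    ∀ y : ℝ, ∀ t : ℝ, 0 ≤ t → ∃ L : X,
      Filter.Tendsto
        (fun v : ℝ => ∫ s in Set.Ioc t v, Complex.exp (-((x : ℂ) + y * Complex.I) * s) • g s)
        Filter.atTop (nhds L) ∧
      ‖Real.exp (x * t) • L‖ ≤ C * (3 + |y| / x) := by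
  intro y t ht
  set w : ℂ := 2 * x + y * Complex.I
  have hw_re : w.re - x = x := by simp [w]; ring
  have hG : ∀ u, 0 ≤ u → ‖∫ s in Ioc 0 u, Real.exp (x * s) • g s‖ ≤ C * Real.exp (x * u) :=
    fun u hu ↦ by
      have := hbound u hu
      rwa [norm_smul, Real.norm_of_nonneg (Real.exp_pos _).le, neg_mul, Real.exp_neg,
        inv_mul_le_iff₀ (Real.exp_pos _), mul_comm] at this
  have hintegrand : ∀ s : ℝ, Complex.exp (-((x : ℂ) + y * Complex.I) * s) • g s
      = Complex.exp (-w * s) • Real.exp (x * s) • g s := fun s ↦ by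
    rw [← Complex.coe_smul, smul_smul, Complex.ofReal_exp, ← Complex.exp_add]
    congr 2
    push_cast [w]
    ring
  obtain ⟨L, hL_lim, hL_le⟩ := exists_tendsto_integral_Ioc_cexp_smul
    (hg.continuousOn_smul isClosed_Ici.isLocallyClosed (by fun_prop)) (by linarith) hG ht
  refine ⟨L, by simpa only [hintegrand] using hL_lim, ?_⟩
  have hC : 0 ≤ C := (norm_nonneg _).trans (hbound 0 le_rfl)
  have hw : 1 + ‖w‖ / x ≤ 3 + |y| / x :=
    calc 1 + ‖w‖ / x ≤ 1 + (2 * x + |y|) / x := by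
          gcongr
          exact (norm_add_le _ _).trans (by simp [abs_of_pos hx])
      _ = 3 + |y| / x := by field_simp; ring
  rw [hw_re] at hL_le
  rw [norm_smul, Real.norm_of_nonneg (Real.exp_pos _).le, ← le_div_iff₀' (Real.exp_pos _),
    div_eq_mul_inv, ← Real.exp_neg, ← neg_mul]
  exact hL_le.trans (by gcongr)

theorem stmt_1 {X : Type*} [NormedAddCommGroup X] [NormedSpace ℂ X] [CompleteSpace X]
    (g : ℝ → X) (hg : LocallyIntegrableOn g (Set.Ici 0))
    (x C : ℝ) (hx : 0 < x) (hC : 0 < C)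
    (hbound : ∀ t : ℝ, 0 ≤ t →
      ‖Real.exp (-x * t) • ∫ s in Set.Ioc (0 : ℝ) t, Real.exp (x * s) • g s‖ ≤ C) :
    ∀ y : ℝ, ∀ t : ℝ, 0 ≤ t → ∃ L : X,
      Filter.Tendsto
        (fun v : ℝ => ∫ s in Set.Ioc t v, Complex.exp (-((x : ℂ) + y * Complex.I) * s) • g s)
        Filter.atTop (nhds L) ∧
      ‖Real.exp (x * t) • L‖ ≤ C * (3 + |y| / x) :=
  stmt_1_general g hg x C hx hbound
end

section
/- Let X be a complex Banach space, let g : [0,∞) → X be locally Bochner integrable, let x₀ > 0 and C > 0, and suppose that ‖e^{-x₀t} ∫₀ᵗ e^{x₀s} g(s) ds‖ ≤ C for every t ≥ 0. Then for every x > 0 one has ‖∫₀ᵗ e^{xs} g(s) ds‖ ≤ (1 + |x − x₀|/x) · C · e^{xt} for every t ≥ 0. -/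
/-!
Put `F u = ∫₀ᵘ e^{x₀ s} g(s) ds`, so that `‖F u‖ ≤ C e^{x₀ u}`, and `a = x - x₀`. Writing
`e^{x s} = e^{a s} e^{x₀ s}` and integrating by parts against `dF` (by Fubini on the triangle
`0 < s < u ≤ t`), `∫₀ᵗ e^{x s} g(s) ds = e^{a t} F t - a ∫₀ᵗ e^{a u} F u du`. The first term has
norm at most `C e^{x t}`, the second at most `|a| C ∫₀ᵗ e^{x u} du ≤ |a| C e^{x t} / x`.
-/

open MeasureTheory Set

section IntegrationByParts

variable {E : Type*} [NormedAddCommGroup E] [NormedSpace ℝ E] [CompleteSpace E] {a b : ℝ}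

theorem integral_Ioc_integral_Ioc_smul_swap {φ : ℝ → ℝ} {h : ℝ → E}
    (hφ : IntegrableOn φ (Ioc a b)) (hh : IntegrableOn h (Ioc a b)) :
    ∫ s in Ioc a b, (∫ u in Ioc s b, φ u) • h s = ∫ u in Ioc a b, φ u • ∫ s in Ioc a u, h s := by
  set μ := volume.restrict (Ioc a b)
  let f : ℝ → ℝ → E := fun s u =>
    {p : ℝ × ℝ | p.1 < p.2}.indicator (fun p => φ p.2 • h p.1) (s, u)
  have hf : Integrable (Function.uncurry f) (μ.prod μ) :=
    (hφ.smul_prod hh).swap.indicator (measurableSet_lt measurable_fst measurable_snd)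
  have hleft : ∀ s ∈ Ioc a b, ∫ u, f s u ∂μ = (∫ u in Ioc s b, φ u) • h s := by
    intro s hs
    have hslice : f s = (Ioi s).indicator fun u => φ u • h s := by
      ext u; simp [f, indicator_apply]
    rw [hslice, setIntegral_indicator measurableSet_Ioi, Ioc_inter_Ioi, max_eq_right hs.1.le,
      integral_smul_const]
  have hright : ∀ u ∈ Ioc a b, ∫ s, f s u ∂μ = φ u • ∫ s in Ioc a u, h s := by
    intro u hu
    have hslice : (fun s => f s u) = (Iio u).indicator fun s => φ u • h s := by
      ext s; simp [f, indicator_apply]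
    have hIoo : Ioc a b ∩ Iio u = Ioo a u := by
      ext s; simp only [mem_inter_iff, mem_Ioc, mem_Iio, mem_Ioo]; grind [hu.2]
    rw [hslice, setIntegral_indicator measurableSet_Iio, hIoo, ← integral_Ioc_eq_integral_Ioo,
      integral_smul]
  calc ∫ s in Ioc a b, (∫ u in Ioc s b, φ u) • h s
      = ∫ s, ∫ u, f s u ∂μ ∂μ := (setIntegral_congr_fun measurableSet_Ioc hleft).symm
    _ = ∫ u, ∫ s, f s u ∂μ ∂μ := integral_integral_swap hf
    _ = ∫ u in Ioc a b, φ u • ∫ s in Ioc a u, h s := setIntegral_congr_fun measurableSet_Ioc hright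

theorem integral_Ioc_smul_eq_sub_integral_deriv_smul_s3 {ψ ψ' : ℝ → ℝ} {h : ℝ → E}
    (hψ : ∀ u, HasDerivAt ψ (ψ' u) u) (hψ' : Continuous ψ') (hh : IntegrableOn h (Ioc a b)) :
    ∫ s in Ioc a b, ψ s • h s
      = ψ b • (∫ s in Ioc a b, h s) - ∫ u in Ioc a b, ψ' u • ∫ s in Ioc a u, h s := by
  have hψ_cont : Continuous ψ := continuous_iff_continuousAt.2 fun u => (hψ u).continuousAt
  have hFTC : ∀ s ∈ Ioc a b, ∫ u in Ioc s b, ψ' u = ψ b - ψ s := fun s hs => by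
    rw [← intervalIntegral.integral_of_le hs.2]
    exact intervalIntegral.integral_eq_sub_of_hasDerivAt (fun u _ => hψ u)
      (hψ'.intervalIntegrable _ _)
  have hsplit : ∀ s ∈ Ioc a b, ψ s • h s = ψ b • h s - (∫ u in Ioc s b, ψ' u) • h s :=
    fun s hs => by rw [hFTC s hs, sub_smul, sub_sub_cancel]
  have hint : IntegrableOn (fun s => (∫ u in Ioc s b, ψ' u) • h s) (Ioc a b) := by
    refine (hh.continuousOn_smul_of_subset (f := fun s => ψ b - ψ s) (by fun_prop)
      isCompact_Icc measurableSet_Ioc Ioc_subset_Icc_self).congr_fun (fun s hs => ?_)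
      measurableSet_Ioc
    rw [hFTC s hs]
  rw [setIntegral_congr_fun measurableSet_Ioc hsplit,
    integral_sub (f := fun s => ψ b • h s) (hh.smul (ψ b)) hint, integral_smul,
    integral_Ioc_integral_Ioc_smul_swap hψ'.integrableOn_Ioc hh]

end IntegrationByParts

theorem norm_le_mul_exp_of_norm_exp_neg_smul_le {E : Type*} [NormedAddCommGroup E]
    [NormedSpace ℝ E] {c t C : ℝ} {v : E} (hv : ‖Real.exp (-c * t) • v‖ ≤ C) :
    ‖v‖ ≤ C * Real.exp (c * t) := by
  rw [norm_smul, Real.norm_of_nonneg (Real.exp_pos _).le, neg_mul, Real.exp_neg,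
    inv_mul_le_iff₀ (Real.exp_pos _)] at hv
  linarith

theorem integral_Ioc_exp_mul_le {x t : ℝ} (hx : 0 < x) (ht : 0 ≤ t) :
    ∫ u in Ioc 0 t, Real.exp (x * u) ≤ Real.exp (x * t) / x := by
  rw [← intervalIntegral.integral_of_le ht, intervalIntegral.integral_comp_mul_left Real.exp hx.ne',
    integral_exp, mul_zero, Real.exp_zero, smul_eq_mul, inv_mul_eq_div]
  gcongr
  linarith

theorem norm_integral_Ioc_mul_exp_smul_le {E : Type*} [NormedAddCommGroup E] [NormedSpace ℝ E]
    {F : ℝ → E} {x x₀ C t : ℝ} (hx : 0 < x) (ht : 0 ≤ t) (hC : 0 ≤ C)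
    (hF : ∀ u ∈ Ioc 0 t, ‖F u‖ ≤ C * Real.exp (x₀ * u)) :
    ‖∫ u in Ioc 0 t, ((x - x₀) * Real.exp ((x - x₀) * u)) • F u‖
      ≤ |x - x₀| * C * Real.exp (x * t) / x :=
  calc ‖∫ u in Ioc 0 t, ((x - x₀) * Real.exp ((x - x₀) * u)) • F u‖
      ≤ ∫ u in Ioc 0 t, |x - x₀| * C * Real.exp (x * u) := by
        refine norm_integral_le_of_norm_le (Continuous.integrableOn_Ioc (by fun_prop)) ?_
        filter_upwards [ae_restrict_mem measurableSet_Ioc] with u hu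
        have hexp : Real.exp ((x - x₀) * u) * Real.exp (x₀ * u) = Real.exp (x * u) := by
          rw [← Real.exp_add]; ring_nf
        rw [norm_smul, Real.norm_eq_abs, abs_mul, abs_of_pos (Real.exp_pos _), ← hexp]
        have := mul_le_mul_of_nonneg_left (hF u hu)
          (by positivity : 0 ≤ |x - x₀| * Real.exp ((x - x₀) * u))
        linarith
    _ = |x - x₀| * C * ∫ u in Ioc 0 t, Real.exp (x * u) := integral_const_mul _ _
    _ ≤ |x - x₀| * C * Real.exp (x * t) / x := by
        rw [mul_div_assoc]; gcongr; exact integral_Ioc_exp_mul_le hx ht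

theorem stmt_3_general {X : Type*} [NormedAddCommGroup X] [NormedSpace ℂ X] [CompleteSpace X]
    (g : ℝ → X) (hg : LocallyIntegrableOn g (Set.Ici 0))
    (x₀ C : ℝ)
    (hbound : ∀ t : ℝ, 0 ≤ t →
      ‖Real.exp (-x₀ * t) • ∫ s in Set.Ioc (0 : ℝ) t, Real.exp (x₀ * s) • g s‖ ≤ C) :
    ∀ x : ℝ, 0 < x → ∀ t : ℝ, 0 ≤ t →
      ‖∫ s in Set.Ioc (0 : ℝ) t, Real.exp (x * s) • g s‖
        ≤ (1 + |x - x₀| / x) * C * Real.exp (x * t) := by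
  intro x hx t ht
  set F : ℝ → X := fun u => ∫ s in Ioc 0 u, Real.exp (x₀ * s) • g s
  have hF : ∀ u, 0 ≤ u → ‖F u‖ ≤ C * Real.exp (x₀ * u) :=
    fun u hu => norm_le_mul_exp_of_norm_exp_neg_smul_le (hbound u hu)
  have hC : 0 ≤ C := (norm_nonneg _).trans (hbound 0 le_rfl)
  have hexp : ∀ s, Real.exp ((x - x₀) * s) * Real.exp (x₀ * s) = Real.exp (x * s) := fun s => by
    rw [← Real.exp_add]; ring_nf
  have hint : IntegrableOn (fun s => Real.exp (x₀ * s) • g s) (Ioc 0 t) :=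
    ((hg.integrableOn_compact_subset Icc_subset_Ici_self isCompact_Icc).continuousOn_smul
      (by fun_prop) isCompact_Icc).mono_set Ioc_subset_Icc_self
  have hparts : ∫ s in Ioc 0 t, Real.exp (x * s) • g s = Real.exp ((x - x₀) * t) • F t
      - ∫ u in Ioc 0 t, ((x - x₀) * Real.exp ((x - x₀) * u)) • F u := by
    simp_rw [← hexp, ← smul_smul (Real.exp ((x - x₀) * _))]
    exact integral_Ioc_smul_eq_sub_integral_deriv_smul_s3
      (fun u => (((hasDerivAt_id u).const_mul (x - x₀)).exp).congr_deriv (by simp only [id]; ring))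
      (by fun_prop) hint
  calc ‖∫ s in Ioc 0 t, Real.exp (x * s) • g s‖
      ≤ ‖Real.exp ((x - x₀) * t) • F t‖
          + ‖∫ u in Ioc 0 t, ((x - x₀) * Real.exp ((x - x₀) * u)) • F u‖ :=
        hparts ▸ norm_sub_le _ _
    _ ≤ Real.exp ((x - x₀) * t) * (C * Real.exp (x₀ * t))
          + |x - x₀| * C * Real.exp (x * t) / x := by
        rw [norm_smul, Real.norm_of_nonneg (Real.exp_pos _).le]
        exact add_le_add (by gcongr; exact hF t ht)
          (norm_integral_Ioc_mul_exp_smul_le hx ht hC fun u hu => hF u hu.1.le)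
    _ = (1 + |x - x₀| / x) * C * Real.exp (x * t) := by
        rw [← hexp]; field_simp

theorem stmt_3 {X : Type*} [NormedAddCommGroup X] [NormedSpace ℂ X] [CompleteSpace X]
    (g : ℝ → X) (hg : LocallyIntegrableOn g (Set.Ici 0))
    (x₀ C : ℝ) (hx₀ : 0 < x₀) (hC : 0 < C)
    (hbound : ∀ t : ℝ, 0 ≤ t →
      ‖Real.exp (-x₀ * t) • ∫ s in Set.Ioc (0 : ℝ) t, Real.exp (x₀ * s) • g s‖ ≤ C) :
    ∀ x : ℝ, 0 < x → ∀ t : ℝ, 0 ≤ t →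
      ‖∫ s in Set.Ioc (0 : ℝ) t, Real.exp (x * s) • g s‖
        ≤ (1 + |x - x₀| / x) * C * Real.exp (x * t) :=
  stmt_3_general g hg x₀ C hbound
end

section
/- Let X be a complex Banach space and (b_n)_{n≥1} a bounded sequence in X; set D := max{sup_n ‖b_n‖, 1} and a_n := b_n/n for every n ≥ 1. Then for every t > 0 and every x with 0 < x ≤ e^t one has ‖e^{-xt} ∑_{n : log n < t} n^x a_n‖ ≤ D·e/x, where the sum runs over all natural numbers n ≥ 1 with log n < t. -/
/-!
Since `‖a n‖ ≤ D / n`, the sum is bounded by `D ∑_{n ≤ N} n^(x-1)` with `N = ⌊e^t⌋`. Comparing each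
term with an increment of `n ↦ n^x` (convexity of `s ↦ s^x` for `x ≥ 1`, concavity for `x ≤ 1`, both
via Bernoulli's inequality) and telescoping gives `∑_{n ≤ N} n^(x-1) ≤ (N + 1)^x / x`. Finally
`e^{-xt} (N + 1)^x ≤ (1 + e^{-t})^x ≤ exp (x e^{-t}) ≤ e` because `x ≤ e^t`.
-/

open Real Finset

lemma mul_rpow_sub_one_le_add_one_rpow_sub_rpow {x m : ℝ} (hx : 1 ≤ x) (hm : 0 < m) :
    x * m ^ (x - 1) ≤ (m + 1) ^ x - m ^ x := by
  have hbernoulli : 1 + x * m⁻¹ ≤ (1 + m⁻¹) ^ x :=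
    one_add_mul_self_le_rpow_one_add (by linarith [inv_pos.2 hm]) hx
  have hsplit : (m + 1) ^ x = m ^ x * (1 + m⁻¹) ^ x := by
    rw [← mul_rpow hm.le (by positivity), mul_add, mul_inv_cancel₀ hm.ne', mul_one]
  rw [hsplit, rpow_sub_one hm.ne']
  have := mul_le_mul_of_nonneg_left hbernoulli (rpow_nonneg hm.le x)
  calc x * (m ^ x / m) = m ^ x * (1 + x * m⁻¹) - m ^ x := by ring
    _ ≤ m ^ x * (1 + m⁻¹) ^ x - m ^ x := by linarith

lemma mul_rpow_sub_one_le_rpow_sub_sub_one_rpow {x m : ℝ} (hx0 : 0 ≤ x) (hx1 : x ≤ 1)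
    (hm : 1 ≤ m) : x * m ^ (x - 1) ≤ m ^ x - (m - 1) ^ x := by
  have hm0 : 0 < m := by linarith
  have hbernoulli : (1 + -m⁻¹) ^ x ≤ 1 + x * -m⁻¹ :=
    rpow_one_add_le_one_add_mul_self (by linarith [inv_le_one_of_one_le₀ hm]) hx0 hx1
  have hsplit : (m - 1) ^ x = m ^ x * (1 + -m⁻¹) ^ x := by
    rw [← mul_rpow hm0.le (by linarith [inv_le_one_of_one_le₀ hm]), mul_add,
      mul_neg, mul_inv_cancel₀ hm0.ne', mul_one, sub_eq_add_neg]
  rw [hsplit, rpow_sub_one hm0.ne']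
  have := mul_le_mul_of_nonneg_left hbernoulli (rpow_nonneg hm0.le x)
  calc x * (m ^ x / m) = m ^ x - m ^ x * (1 + x * -m⁻¹) := by ring
    _ ≤ m ^ x - m ^ x * (1 + -m⁻¹) ^ x := by linarith

lemma sum_Icc_rpow_sub_one_le {x : ℝ} (hx : 0 < x) (N : ℕ) :
    ∑ n ∈ Icc 1 N, (n : ℝ) ^ (x - 1) ≤ ((N : ℝ) + 1) ^ x / x := by
  rw [le_div_iff₀ hx, sum_mul, ← Ico_add_one_right_eq_Icc, sum_Ico_eq_sum_range, Nat.add_sub_cancel]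
  push_cast
  rcases le_total 1 x with hx1 | hx1
  · calc ∑ i ∈ range N, ((1 : ℝ) + i) ^ (x - 1) * x
        ≤ ∑ i ∈ range N, ((((i + 1 : ℕ) : ℝ) + 1) ^ x - ((i : ℝ) + 1) ^ x) := by
          refine sum_le_sum fun i _ ↦ ?_
          rw [mul_comm, add_comm (1 : ℝ)]
          push_cast
          exact mul_rpow_sub_one_le_add_one_rpow_sub_rpow hx1 (by positivity)
      _ = ((N : ℝ) + 1) ^ x - 1 := by
          rw [sum_range_sub (fun i : ℕ ↦ ((i : ℝ) + 1) ^ x)]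
          simp
      _ ≤ ((N : ℝ) + 1) ^ x := by linarith
  · calc ∑ i ∈ range N, ((1 : ℝ) + i) ^ (x - 1) * x
        ≤ ∑ i ∈ range N, (((i + 1 : ℕ) : ℝ) ^ x - (i : ℝ) ^ x) := by
          refine sum_le_sum fun i _ ↦ ?_
          rw [mul_comm, add_comm (1 : ℝ)]
          have := mul_rpow_sub_one_le_rpow_sub_sub_one_rpow hx.le hx1
            (by linarith [(Nat.cast_nonneg i : (0 : ℝ) ≤ i)] : (1 : ℝ) ≤ i + 1)
          push_cast
          rwa [add_sub_cancel_right] at this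
      _ = (N : ℝ) ^ x := by
          rw [sum_range_sub (fun i : ℕ ↦ (i : ℝ) ^ x)]
          simp [zero_rpow hx.ne']
      _ ≤ ((N : ℝ) + 1) ^ x := rpow_le_rpow (by positivity) (by linarith) hx.le

lemma norm_sum_rpow_smul_le {E : Type*} [SeminormedAddCommGroup E] [NormedSpace ℝ E]
    {a : ℕ → E} {C x : ℝ} (hx : 0 < x) (ha : ∀ n, 1 ≤ n → ‖a n‖ ≤ C / n) {N : ℕ}
    {s : Finset ℕ} (hs : s ⊆ Icc 1 N) :
    ‖∑ n ∈ s, (n : ℝ) ^ x • a n‖ ≤ C * (((N : ℝ) + 1) ^ x / x) := by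
  have hC : 0 ≤ C := by simpa using (norm_nonneg _).trans (ha 1 le_rfl)
  have hterm : ∀ n ∈ Icc 1 N, ‖(n : ℝ) ^ x • a n‖ ≤ C * (n : ℝ) ^ (x - 1) := by
    intro n hn
    have hn0 : (0 : ℝ) < n := by exact_mod_cast (mem_Icc.mp hn).1
    rw [norm_smul, norm_of_nonneg (rpow_nonneg hn0.le x), rpow_sub_one hn0.ne']
    calc (n : ℝ) ^ x * ‖a n‖ ≤ (n : ℝ) ^ x * (C / n) :=
          mul_le_mul_of_nonneg_left (ha n (mem_Icc.mp hn).1) (rpow_nonneg hn0.le x)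
      _ = C * ((n : ℝ) ^ x / n) := by ring
  calc ‖∑ n ∈ s, (n : ℝ) ^ x • a n‖ ≤ ∑ n ∈ s, ‖(n : ℝ) ^ x • a n‖ := norm_sum_le _ _
    _ ≤ ∑ n ∈ Icc 1 N, ‖(n : ℝ) ^ x • a n‖ :=
        sum_le_sum_of_subset_of_nonneg hs fun _ _ _ ↦ norm_nonneg _
    _ ≤ ∑ n ∈ Icc 1 N, C * (n : ℝ) ^ (x - 1) := sum_le_sum hterm
    _ ≤ C * (((N : ℝ) + 1) ^ x / x) := by
        rw [← mul_sum]
        exact mul_le_mul_of_nonneg_left (sum_Icc_rpow_sub_one_le hx N) hC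

lemma exp_neg_mul_mul_add_one_rpow_le_exp_one {t x y : ℝ} (hx0 : 0 ≤ x) (hx : x ≤ exp t)
    (hy0 : 0 ≤ y) (hy : y ≤ exp t) : exp (-x * t) * (y + 1) ^ x ≤ exp 1 := by
  have hy1 : y + 1 ≤ exp (t + exp (-t)) := by
    have hexp : exp t * exp (-t) = 1 := by rw [← exp_add, add_neg_cancel, exp_zero]
    rw [exp_add]
    nlinarith [add_one_le_exp (exp (-t)), exp_pos t]
  have hxt : x * exp (-t) ≤ 1 := by
    simpa [← exp_add] using mul_le_mul_of_nonneg_right hx (exp_pos (-t)).le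
  calc exp (-x * t) * (y + 1) ^ x ≤ exp (-x * t) * exp (t + exp (-t)) ^ x := by
        gcongr
    _ = exp (x * exp (-t)) := by rw [← exp_mul, ← exp_add]; ring_nf
    _ ≤ exp 1 := exp_le_exp.mpr hxt

theorem stmt_11_general {X : Type*} [NormedAddCommGroup X] [NormedSpace ℂ X]
    (b : ℕ → X) (hbdd : BddAbove (Set.range fun n : ℕ => ‖b (n + 1)‖))
    (D : ℝ) (hD : D = max (⨆ n : ℕ, ‖b (n + 1)‖) 1)
    (a : ℕ → X) (ha : ∀ n : ℕ, 1 ≤ n → a n = ((n : ℝ)⁻¹) • b n) :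
    ∀ t : ℝ, 0 < t → ∀ x : ℝ, 0 < x → x ≤ Real.exp t →
      ‖Real.exp (-x * t) •
          ∑ n ∈ (Finset.Icc 1 ⌊Real.exp t⌋₊).filter (fun n : ℕ => Real.log (n : ℝ) < t),
            ((n : ℝ) ^ x) • a n‖
        ≤ D * Real.exp 1 / x := by
  intro t _ x hx hxt
  have hD0 : 0 ≤ D := hD ▸ zero_le_one.trans (le_max_right _ _)
  have ha_le : ∀ n, 1 ≤ n → ‖a n‖ ≤ D / n := by
    intro n hn
    have hbn : ‖b n‖ ≤ D := by
      obtain ⟨k, rfl⟩ := Nat.exists_eq_add_of_le' hn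
      exact hD ▸ (le_ciSup hbdd k).trans (le_max_left _ _)
    rw [ha n hn, norm_smul, norm_inv, RCLike.norm_natCast, inv_mul_eq_div]
    gcongr
  have hN : (⌊exp t⌋₊ : ℝ) ≤ exp t := Nat.floor_le (exp_pos t).le
  rw [norm_smul, norm_of_nonneg (exp_pos _).le]
  calc exp (-x * t) * ‖∑ n ∈ (Icc 1 ⌊exp t⌋₊).filter (fun n : ℕ ↦ log n < t), (n : ℝ) ^ x • a n‖
      ≤ exp (-x * t) * (D * (((⌊exp t⌋₊ : ℝ) + 1) ^ x / x)) := by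
        gcongr
        exact norm_sum_rpow_smul_le hx ha_le (filter_subset _ _)
    _ = D * (exp (-x * t) * ((⌊exp t⌋₊ : ℝ) + 1) ^ x) / x := by ring
    _ ≤ D * exp 1 / x := by
        gcongr
        exact exp_neg_mul_mul_add_one_rpow_le_exp_one hx.le hxt (Nat.cast_nonneg _) hN

theorem stmt_11 {X : Type*} [NormedAddCommGroup X] [NormedSpace ℂ X] [CompleteSpace X]
    (b : ℕ → X) (hbdd : BddAbove (Set.range fun n : ℕ => ‖b (n + 1)‖))
    (D : ℝ) (hD : D = max (⨆ n : ℕ, ‖b (n + 1)‖) 1)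
    (a : ℕ → X) (ha : ∀ n : ℕ, 1 ≤ n → a n = ((n : ℝ)⁻¹) • b n) :
    ∀ t : ℝ, 0 < t → ∀ x : ℝ, 0 < x → x ≤ Real.exp t →
      ‖Real.exp (-x * t) •
          ∑ n ∈ (Finset.Icc 1 ⌊Real.exp t⌋₊).filter (fun n : ℕ => Real.log (n : ℝ) < t),
            ((n : ℝ) ^ x) • a n‖
        ≤ D * Real.exp 1 / x :=
  stmt_11_general b hbdd D hD a ha
end

section
/- Let X be a complex Banach space and (a_n)_{n≥1} a sequence in X, and assume that for some x > 0 and C > 0 one has ‖e^{-xt} ∑_{n : log n < t} n^x a_n‖ ≤ C for every t ≥ 0, where the sum runs over natural numbers n ≥ 1 with log n < t. Then for every y ∈ ℝ one has ‖e^{-xt} ∑_{n : log n < t} n^{x+iy} a_n‖ ≤ C(1 + |y|/x) for every t ≥ 0. -/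
open MeasureTheory intervalIntegral Complex

noncomputable def Fset16 (u : ℝ) : Finset ℕ :=
  (Finset.Icc 1 ⌊Real.exp u⌋₊).filter (fun n : ℕ => Real.log (n : ℝ) < u)

lemma mem_Fset16 {u : ℝ} {n : ℕ} : n ∈ Fset16 u ↔ 1 ≤ n ∧ Real.log (n : ℝ) < u := by
  simp only [Fset16, Finset.mem_filter, Finset.mem_Icc]
  constructor
  · rintro ⟨⟨h1, _⟩, h2⟩; exact ⟨h1, h2⟩
  · rintro ⟨h1, h2⟩
    refine ⟨⟨h1, Nat.le_floor ?_⟩, h2⟩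
    have hn0 : (0:ℝ) < (n:ℝ) := by exact_mod_cast h1
    rw [show (n:ℝ) = Real.exp (Real.log n) from (Real.exp_log hn0).symm]
    exact (Real.exp_lt_exp.2 h2).le

lemma cpow_eq16 {n : ℕ} (h1 : 1 ≤ n) (x y : ℝ) :
    ((n : ℕ) : ℂ) ^ ((x : ℂ) + y * Complex.I)
      = ((((n:ℝ) ^ x : ℝ)) : ℂ) * Complex.exp (y * Real.log (n:ℝ) * Complex.I) := by
  have hn0 : (0:ℝ) < (n:ℝ) := by exact_mod_cast h1
  have hne : ((n:ℕ) : ℂ) ≠ 0 := by exact_mod_cast (by omega : n ≠ 0)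
  rw [Complex.cpow_def_of_ne_zero hne]
  have hlog : Complex.log ((n:ℕ) : ℂ) = (Real.log (n:ℝ) : ℂ) := by
    rw [show ((n:ℕ):ℂ) = (((n:ℝ)):ℂ) by push_cast; ring]
    exact (Complex.ofReal_log hn0.le).symm
  rw [hlog]
  rw [show ((Real.log (n:ℝ) : ℂ)) * ((x:ℂ) + y * Complex.I)
      = ((x * Real.log (n:ℝ) : ℝ) : ℂ) + y * Real.log (n:ℝ) * Complex.I by push_cast; ring]
  rw [Complex.exp_add]
  congr 1
  rw [← Complex.ofReal_exp, Real.rpow_def_of_pos hn0]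
  norm_cast
  rw [Real.exp_eq_exp]
  ring


lemma arith16 (x C yab E e' : ℝ) (hx : 0 < x) (hC : 0 < C) (hy : 0 ≤ yab)
    (h1 : e' * E = 1) (he : 0 < e') :
    e' * (C * E + yab * (C * ((E - 1) / x))) ≤ C * (1 + yab / x) := by
  have key : e' * (C * E + yab * (C * ((E - 1) / x))) * x ≤ C * (1 + yab / x) * x := by
    have e1 : e' * (C * E + yab * (C * ((E - 1) / x))) * x
        = C * (e' * E) * x + yab * C * ((e' * E) - e') := by
      field_simp
    have e2 : C * (1 + yab / x) * x = C * x + yab * C := by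
      field_simp
    rw [e1, e2, h1]
    nlinarith [mul_nonneg (mul_nonneg hy hC.le) he.le]
  exact le_of_mul_le_mul_right key hx

theorem stmt_16 {X : Type*} [NormedAddCommGroup X] [NormedSpace ℂ X] [CompleteSpace X]
    (a : ℕ → X) (x C : ℝ) (hx : 0 < x) (hC : 0 < C)
    (hbound : ∀ t : ℝ, 0 ≤ t →
      ‖Real.exp (-x * t) •
          ∑ n ∈ (Finset.Icc 1 ⌊Real.exp t⌋₊).filter (fun n : ℕ => Real.log (n : ℝ) < t),
            ((n : ℝ) ^ x) • a n‖ ≤ C) :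
    ∀ y : ℝ, ∀ t : ℝ, 0 ≤ t →
      ‖Real.exp (-x * t) •
          ∑ n ∈ (Finset.Icc 1 ⌊Real.exp t⌋₊).filter (fun n : ℕ => Real.log (n : ℝ) < t),
            (((n : ℕ) : ℂ) ^ ((x : ℂ) + y * Complex.I)) • a n‖
        ≤ C * (1 + |y| / x) := by
  intro y t ht
  have hSnorm : ∀ u : ℝ, 0 ≤ u →
      ‖∑ n ∈ Fset16 u, ((n : ℝ) ^ x) • a n‖ ≤ C * Real.exp (x * u) := by
    intro u hu
    have h := hbound u hu
    rw [norm_smul, Real.norm_eq_abs, Real.abs_exp] at h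
    calc ‖∑ n ∈ Fset16 u, ((n : ℝ) ^ x) • a n‖
        = Real.exp (x*u) * (Real.exp (-x*u) * ‖∑ n ∈ Fset16 u, ((n : ℝ) ^ x) • a n‖) := by
          have h2 : Real.exp (x*u) * Real.exp (-x*u) = 1 := by
            rw [← Real.exp_add]; ring_nf; exact Real.exp_zero
          rw [← mul_assoc, h2, one_mul]
      _ ≤ Real.exp (x*u) * C := mul_le_mul_of_nonneg_left h (Real.exp_pos _).le
      _ = C * Real.exp (x*u) := mul_comm _ _
  set v : ℕ → X := fun n => ((n : ℝ) ^ x) • a n with hv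
  set S : ℝ → X := fun u => ∑ n ∈ Fset16 u, v n with hS
  set g : ℕ → ℝ → X := fun n s =>
    if Real.log (n:ℝ) < s then Complex.exp (y * s * Complex.I) • v n else 0 with hg
  have hgind : ∀ n : ℕ, g n = Set.indicator (Set.Ioi (Real.log (n:ℝ)))
      (fun s => Complex.exp (y * s * Complex.I) • v n) := by
    intro n; funext s
    simp [hg, Set.indicator_apply, Set.mem_Ioi]
  have hcont : ∀ n : ℕ, Continuous (fun s : ℝ => Complex.exp (y * s * Complex.I) • v n) := by
    intro n
    exact (Complex.continuous_exp.comp (by continuity)).smul continuous_const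
  have hgint : ∀ n : ℕ, ∀ p q : ℝ, IntervalIntegrable (g n) volume p q := by
    intro n p q
    rw [hgind, intervalIntegrable_iff]
    exact (intervalIntegrable_iff.mp ((hcont n).intervalIntegrable p q)).indicator
      measurableSet_Ioi
  have hSsum : ∀ s : ℝ, s ≤ t →
      Complex.exp (y * s * Complex.I) • S s = ∑ n ∈ Fset16 t, g n s := by
    intro s hs
    have hset : Fset16 s = (Fset16 t).filter (fun n : ℕ => Real.log (n:ℝ) < s) := by
      ext n
      rw [mem_Fset16, Finset.mem_filter, mem_Fset16]
      constructor
      · rintro ⟨h1, h2⟩; exact ⟨⟨h1, h2.trans_le hs⟩, h2⟩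
      · rintro ⟨⟨h1, _⟩, h2⟩; exact ⟨h1, h2⟩
    simp only [hS, hset, Finset.sum_filter, Finset.smul_sum]
    apply Finset.sum_congr rfl
    intro n _
    by_cases h : Real.log (n:ℝ) < s <;> simp [hg, h]
  have hkey : (∫ s in (0:ℝ)..t, Complex.exp (y * s * Complex.I) • S s)
      = ∑ n ∈ Fset16 t, ∫ s in (0:ℝ)..t, g n s := by
    rw [← intervalIntegral.integral_finset_sum (fun n _ => hgint n 0 t)]
    apply intervalIntegral.integral_congr
    intro s hs
    rw [Set.uIcc_of_le ht] at hs
    exact hSsum s hs.2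
  have hterm : ∀ n ∈ Fset16 t, (∫ s in (0:ℝ)..t, g n s)
      = (∫ s in (Real.log (n:ℝ))..t, Complex.exp (y * s * Complex.I)) • v n := by
    intro n hn
    obtain ⟨h1, h2⟩ := mem_Fset16.mp hn
    set L := Real.log (n:ℝ) with hL
    have hL0 : 0 ≤ L := Real.log_nonneg (by exact_mod_cast h1)
    rw [← intervalIntegral.integral_add_adjacent_intervals (hgint n 0 L) (hgint n L t)]
    have e1 : (∫ s in (0:ℝ)..L, g n s) = 0 := by
      rw [intervalIntegral.integral_congr (g := fun _ => (0:X)) ?_,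
        intervalIntegral.integral_zero]
      intro s hs
      rw [Set.uIcc_of_le hL0] at hs
      exact if_neg (not_lt.2 hs.2)
    have e2 : (∫ s in L..t, g n s)
        = ∫ s in L..t, Complex.exp (y * s * Complex.I) • v n := by
      apply intervalIntegral.integral_congr_ae
      filter_upwards with s hs
      rw [Set.uIoc_of_le h2.le] at hs
      exact if_pos hs.1
    rw [e1, e2, zero_add, intervalIntegral.integral_smul_const]
  have hexp : ∀ L : ℝ, (↑y * Complex.I) * ∫ s in L..t, Complex.exp (y * s * Complex.I)
      = Complex.exp (y * t * Complex.I) - Complex.exp (y * L * Complex.I) := by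
    intro L
    by_cases hy : y = 0
    · simp [hy]
    · have hc : (y : ℂ) * Complex.I ≠ 0 := by simp [Complex.ext_iff, hy]
      have h := integral_exp_mul_complex (a := L) (b := t) hc
      simp only [show ∀ s : ℂ, (y:ℂ) * Complex.I * s = y * s * Complex.I
        from fun s => by ring] at h
      rw [h]
      field_simp
      exact mul_div_cancel_left₀ _ (Complex.ofReal_ne_zero.mpr hy)
  have hid : (∑ n ∈ Fset16 t, (((n : ℕ) : ℂ) ^ ((x : ℂ) + y * Complex.I)) • a n)
      = Complex.exp (y * t * Complex.I) • S t
        - (↑y * Complex.I) • ∫ s in (0:ℝ)..t, Complex.exp (y * s * Complex.I) • S s := by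
    rw [hkey]
    simp only [hS]
    rw [Finset.smul_sum, Finset.smul_sum, ← Finset.sum_sub_distrib]
    apply Finset.sum_congr rfl
    intro n hn
    obtain ⟨h1, _⟩ := mem_Fset16.mp hn
    rw [hterm n hn, smul_smul, hexp, sub_smul, sub_sub_cancel, cpow_eq16 h1,
      mul_comm, mul_smul, Complex.coe_smul]
  show ‖Real.exp (-x * t) •
      ∑ n ∈ Fset16 t, (((n : ℕ) : ℂ) ^ ((x : ℂ) + y * Complex.I)) • a n‖ ≤ C * (1 + |y| / x)
  rw [hid, norm_smul, Real.norm_eq_abs, Real.abs_exp]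
  have habs : ‖(y:ℂ) * Complex.I‖ = |y| := by
    rw [norm_mul, Complex.norm_I, mul_one, Complex.norm_real, Real.norm_eq_abs]
  have hnorm1 : ‖Complex.exp (y * t * Complex.I) • S t‖ ≤ C * Real.exp (x * t) := by
    rw [norm_smul,
      show ((y:ℂ) * t * Complex.I) = ((y*t : ℝ):ℂ) * Complex.I by push_cast; ring,
      Complex.norm_exp_ofReal_mul_I, one_mul]
    exact hSnorm t ht
  have hint : ‖∫ s in (0:ℝ)..t, Complex.exp (y * s * Complex.I) • S s‖
      ≤ C * ((Real.exp (x * t) - 1) / x) := by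
    have hb : ∀ᵐ (s : ℝ) ∂(volume.restrict (Set.uIoc (0:ℝ) t)),
        ‖Complex.exp (y * s * Complex.I) • S s‖ ≤ C * Real.exp (x * s) := by
      rw [Set.uIoc_of_le ht]
      refine (ae_restrict_iff' measurableSet_Ioc).2 (Filter.Eventually.of_forall ?_)
      intro s hs
      rw [norm_smul,
        show ((y:ℂ) * s * Complex.I) = ((y*s : ℝ):ℂ) * Complex.I by push_cast; ring,
        Complex.norm_exp_ofReal_mul_I, one_mul]
      exact hSnorm s hs.1.le
    have hgi : IntervalIntegrable (fun s => C * Real.exp (x * s)) volume 0 t :=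
      (continuous_const.mul (Real.continuous_exp.comp (by continuity))).intervalIntegrable 0 t
    refine (intervalIntegral.norm_integral_le_of_norm_le ht
      (by rw [Set.uIoc_of_le ht] at hb; exact (ae_restrict_iff' measurableSet_Ioc).1 hb) hgi).trans ?_
    have hval : (∫ s in (0:ℝ)..t, C * Real.exp (x * s)) = C * ((Real.exp (x * t) - 1) / x) := by
      rw [intervalIntegral.integral_const_mul]
      congr 1
      have h := intervalIntegral.integral_comp_mul_left (a := (0:ℝ)) (b := t)
        (fun u => Real.exp u) (ne_of_gt hx)
      simp only [mul_zero] at h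
      rw [h, integral_exp, Real.exp_zero, smul_eq_mul]
      field_simp
    have hnn : 0 ≤ C * ((Real.exp (x * t) - 1) / x) := by
      have h1 : (1:ℝ) ≤ Real.exp (x * t) := Real.one_le_exp (by positivity)
      have : 0 ≤ (Real.exp (x*t) - 1) / x := div_nonneg (by linarith) hx.le
      positivity
    rw [hval]
  have step : ‖Complex.exp (y * t * Complex.I) • S t
      - (↑y * Complex.I) • ∫ s in (0:ℝ)..t, Complex.exp (y * s * Complex.I) • S s‖
      ≤ C * Real.exp (x * t) + |y| * (C * ((Real.exp (x * t) - 1) / x)) := by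
    refine (norm_sub_le _ _).trans (add_le_add hnorm1 ?_)
    rw [norm_smul, habs]
    exact mul_le_mul_of_nonneg_left hint (abs_nonneg y)
  refine (mul_le_mul_of_nonneg_left step (Real.exp_pos (-x*t)).le).trans ?_
  have h1 : Real.exp (-x*t) * Real.exp (x*t) = 1 := by
    rw [← Real.exp_add]; ring_nf; exact Real.exp_zero
  have hEpos : 0 < Real.exp (-x*t) := Real.exp_pos _
  have hyn : 0 ≤ |y| := abs_nonneg y
  exact arith16 x C (|y|) _ _ hx hC hyn h1 hEpos
end

section
/- Let X be a complex Banach space and (a_n)_{n≥1} a sequence in X, and assume that for some x₀ > 0 and C > 0 one has ‖e^{-x₀t} ∑_{n : log n < t} n^{x₀} a_n‖ ≤ C for every t ≥ 0, where the sum runs over natural numbers n ≥ 1 with log n < t. Then for every x with 0 < x ≤ x₀ one has ‖e^{-xt} ∑_{n : log n < t} n^{x} a_n‖ ≤ C x₀ / x for every t ≥ 0. -/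
/-!
Put `b n = n ^ x₀ • a n` and `S m = b 1 + ⋯ + b m`. The terms with `log n < t` are those with
`n < ⌈e ^ t⌉`, so letting `e ^ t` decrease to `m` in the hypothesis gives `‖S m‖ ≤ C m ^ x₀`.
Summation by parts against the decreasing weights `n ^ (x - x₀)` bounds
`‖∑_{n ≤ N} n ^ x • a n‖` by `C N ^ x + C ∑_{n < N} (n ^ (x - x₀) - (n + 1) ^ (x - x₀)) n ^ x₀`.
Since `1 - r ^ (-s) ≤ s log r ≤ (s / x) (r ^ x - 1)` for `r > 0`, each term of the last sum is at
most `((x₀ - x) / x) ((n + 1) ^ x - n ^ x)`, so the sum telescopes and the total is at most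
`C (x₀ / x) N ^ x ≤ C (x₀ / x) e ^ (x t)`.
-/

open Finset Real Filter Topology

theorem filter_log_lt_eq_Ico (t : ℝ) :
    (Icc 1 ⌊exp t⌋₊).filter (fun n : ℕ => log (n : ℝ) < t) = Ico 1 ⌈exp t⌉₊ := by
  ext n
  simp only [mem_filter, mem_Icc, mem_Ico, Nat.lt_ceil]
  constructor
  · rintro ⟨⟨hn, -⟩, hlog⟩
    exact ⟨hn, (log_lt_iff_lt_exp (by exact_mod_cast hn)).1 hlog⟩
  · rintro ⟨hn, hlt⟩
    exact ⟨⟨hn, Nat.le_floor hlt.le⟩, (log_lt_iff_lt_exp (by exact_mod_cast hn)).2 hlt⟩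

theorem one_sub_rpow_le_mul_rpow_sub_one {x y r : ℝ} (hx : 0 < x) (hxy : x ≤ y) (hr : 0 < r) :
    1 - r ^ (x - y) ≤ (y - x) / x * (r ^ x - 1) := by
  have hlog_le {s : ℝ} : s * log r ≤ r ^ s - 1 := by
    rw [← log_rpow hr]; exact log_le_sub_one_of_pos (rpow_pos_of_pos hr s)
  calc 1 - r ^ (x - y) ≤ (y - x) / x * (x * log r) := by
        rw [← mul_assoc, div_mul_cancel₀ _ hx.ne']
        linarith [hlog_le (s := x - y)]
    _ ≤ (y - x) / x * (r ^ x - 1) :=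
        mul_le_mul_of_nonneg_left hlog_le (div_nonneg (sub_nonneg.2 hxy) hx.le)

theorem rpow_sub_rpow_mul_rpow_le {x y u v : ℝ} (hx : 0 < x) (hxy : x ≤ y) (hu : 0 < u)
    (hv : 0 < v) : (u ^ (x - y) - v ^ (x - y)) * u ^ y ≤ (y - x) / x * (v ^ x - u ^ x) := by
  obtain ⟨r, hr, rfl⟩ : ∃ r, 0 < r ∧ v = u * r := ⟨v / u, div_pos hv hu, by field_simp⟩
  have key := mul_le_mul_of_nonneg_left (one_sub_rpow_le_mul_rpow_sub_one hx hxy hr)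
    (rpow_nonneg hu.le x)
  have hux : u ^ (x - y) * u ^ y = u ^ x := by rw [← rpow_add hu, sub_add_cancel]
  rw [mul_rpow hu.le hr.le, mul_rpow hu.le hr.le]
  linear_combination key + (1 - r ^ (x - y)) * hux

theorem sum_Ico_one_eq_sum_range {M : Type*} [AddCommMonoid M] (f : ℕ → M) (N : ℕ) :
    ∑ n ∈ Ico 1 (N + 1), f n = ∑ i ∈ range N, f (i + 1) := by
  rw [range_eq_Ico, sum_Ico_add']

section

variable {E : Type*} [NormedAddCommGroup E]

theorem norm_sum_Ico_le_of_forall_exp {f : ℕ → E} {y C : ℝ} (hy : 0 < y)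
    (hf : ∀ t : ℝ, 0 ≤ t → ‖∑ n ∈ Ico 1 ⌈exp t⌉₊, f n‖ ≤ C * exp (y * t)) (k : ℕ) :
    ‖∑ n ∈ Ico 1 (k + 1), f n‖ ≤ C * (k : ℝ) ^ y := by
  rcases k.eq_zero_or_pos with rfl | hk
  · simp [zero_rpow hy.ne']
  have hnear : ∀ r ∈ Set.Ioc (k : ℝ) (k + 1), ‖∑ n ∈ Ico 1 (k + 1), f n‖ ≤ C * r ^ y := by
    rintro r ⟨hkr, hrk⟩
    have hr : 0 < r := lt_of_le_of_lt k.cast_nonneg hkr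
    have hceil : ⌈r⌉₊ = k + 1 :=
      (Nat.ceil_eq_iff k.succ_ne_zero).2 ⟨by simpa using hkr, by exact_mod_cast hrk⟩
    have hlog : 0 ≤ log r := log_nonneg (le_trans (by exact_mod_cast hk) hkr.le)
    simpa [exp_log hr, hceil, rpow_def_of_pos hr, mul_comm] using hf (log r) hlog
  have hlim : Tendsto (fun r : ℝ => C * r ^ y) (𝓝[>] (k : ℝ)) (𝓝 (C * (k : ℝ) ^ y)) :=
    ((continuousAt_const.mul (continuousAt_rpow_const _ _ (Or.inr hy.le))).tendsto).mono_left
      nhdsWithin_le_nhds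
  exact ge_of_tendsto hlim (eventually_of_mem (Ioc_mem_nhdsGT (lt_add_one _)) hnear)

variable [NormedSpace ℝ E]

theorem norm_exp_neg_mul_smul_le_iff {y t C : ℝ} {v : E} :
    ‖exp (-y * t) • v‖ ≤ C ↔ ‖v‖ ≤ C * exp (y * t) := by
  rw [norm_smul, norm_of_nonneg (exp_pos _).le, neg_mul, exp_neg, ← div_eq_inv_mul,
    div_le_iff₀ (exp_pos _)]

theorem norm_sum_range_smul_le_of_antitone {F : ℕ → ℝ} {g : ℕ → E} {B : ℕ → ℝ}
    (hF : Antitone F) (hF0 : ∀ i, 0 ≤ F i) (hB : ∀ k, ‖∑ i ∈ range k, g i‖ ≤ B k) (N : ℕ) :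
    ‖∑ i ∈ range N, F i • g i‖ ≤
      F (N - 1) * B N + ∑ i ∈ range (N - 1), (F i - F (i + 1)) * B (i + 1) := by
  rw [sum_range_by_parts]
  refine (norm_sub_le _ _).trans (add_le_add ?_ ((norm_sum_le _ _).trans (sum_le_sum ?_)))
  · rw [norm_smul, norm_of_nonneg (hF0 _)]
    exact mul_le_mul_of_nonneg_left (hB N) (hF0 _)
  · intro i _
    have hdiff : 0 ≤ F i - F (i + 1) := sub_nonneg.2 (hF i.le_succ)
    rw [norm_smul, norm_sub_rev, norm_of_nonneg hdiff]
    exact mul_le_mul_of_nonneg_left (hB _) hdiff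

theorem norm_sum_Ico_rpow_smul_le {b : ℕ → E} {x y C : ℝ} (hx : 0 < x) (hxy : x ≤ y)
    (hC : 0 ≤ C) (hb : ∀ k : ℕ, ‖∑ n ∈ Ico 1 (k + 1), b n‖ ≤ C * (k : ℝ) ^ y) (N : ℕ) :
    ‖∑ n ∈ Ico 1 (N + 1), (n : ℝ) ^ (x - y) • b n‖ ≤ C * y / x * (N : ℝ) ^ x := by
  set F : ℕ → ℝ := fun i => ((i : ℝ) + 1) ^ (x - y)
  set G : ℕ → ℝ := fun i => ((i : ℝ) + 1) ^ x
  have hF : Antitone F := fun i j hij =>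
    rpow_le_rpow_of_nonpos (by positivity) (by gcongr) (by linarith)
  have hB (k : ℕ) : ‖∑ i ∈ range k, b (i + 1)‖ ≤ C * (k : ℝ) ^ y := by
    rw [← sum_Ico_one_eq_sum_range]; exact hb k
  have habel := norm_sum_range_smul_le_of_antitone hF (fun i => by positivity) hB
  rw [sum_Ico_one_eq_sum_range]
  rcases N with _ | M
  · simp [zero_rpow hx.ne']
  have hdecay (i : ℕ) : (F i - F (i + 1)) * (C * ((i : ℝ) + 1) ^ y) ≤
      C * ((y - x) / x) * (G (i + 1) - G i) := by
    have h := rpow_sub_rpow_mul_rpow_le hx hxy (u := (i : ℝ) + 1) (v := (i : ℝ) + 1 + 1)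
      (by positivity) (by positivity)
    simp only [F, G]
    push_cast
    nlinarith [mul_le_mul_of_nonneg_left h hC]
  push_cast
  calc ‖∑ i ∈ range (M + 1), F i • b (i + 1)‖
      ≤ F M * (C * ((M : ℝ) + 1) ^ y) +
          ∑ i ∈ range M, (F i - F (i + 1)) * (C * ((i : ℝ) + 1) ^ y) := by
        simpa using habel (M + 1)
    _ ≤ C * ((M : ℝ) + 1) ^ x + ∑ i ∈ range M, C * ((y - x) / x) * (G (i + 1) - G i) := by
      refine add_le_add (le_of_eq ?_) (sum_le_sum fun i _ => hdecay i)
      rw [mul_left_comm, ← rpow_add (by positivity), sub_add_cancel]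
    _ = C * ((M : ℝ) + 1) ^ x + C * ((y - x) / x) * (((M : ℝ) + 1) ^ x - 1) := by
      rw [← mul_sum, sum_range_sub]
      simp [G]
    _ ≤ C * y / x * ((M : ℝ) + 1) ^ x := by
      have hK : 0 ≤ C * ((y - x) / x) := mul_nonneg hC (div_nonneg (sub_nonneg.2 hxy) hx.le)
      have hsplit : C * y / x = C + C * ((y - x) / x) := by field_simp; ring
      rw [hsplit]
      linarith

end

theorem stmt_17_general {X : Type*} [NormedAddCommGroup X] [NormedSpace ℂ X]
    (a : ℕ → X) (x₀ C : ℝ)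
    (hbound : ∀ t : ℝ, 0 ≤ t →
      ‖Real.exp (-x₀ * t) •
          ∑ n ∈ (Finset.Icc 1 ⌊Real.exp t⌋₊).filter (fun n : ℕ => Real.log (n : ℝ) < t),
            ((n : ℝ) ^ x₀) • a n‖ ≤ C) :
    ∀ x : ℝ, 0 < x → x ≤ x₀ → ∀ t : ℝ, 0 ≤ t →
      ‖Real.exp (-x * t) •
          ∑ n ∈ (Finset.Icc 1 ⌊Real.exp t⌋₊).filter (fun n : ℕ => Real.log (n : ℝ) < t),
            ((n : ℝ) ^ x) • a n‖
        ≤ C * x₀ / x := by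
  intro x hx hxx₀ t _
  simp only [filter_log_lt_eq_Ico, norm_exp_neg_mul_smul_le_iff] at hbound ⊢
  -- at `t = 0` the sum is empty
  have hC : 0 ≤ C := by simpa using hbound 0 le_rfl
  have hpartial := norm_sum_Ico_le_of_forall_exp (hx.trans_le hxx₀) hbound
  obtain ⟨N, hN⟩ : ∃ N, ⌈exp t⌉₊ = N + 1 := Nat.exists_eq_add_one.2 (Nat.ceil_pos.2 (exp_pos t))
  have hNt : (N : ℝ) ≤ exp t := (Nat.lt_ceil.1 (hN ▸ N.lt_succ_self)).le
  have hsplit (n : ℕ) : (n : ℝ) ^ x • a n = (n : ℝ) ^ (x - x₀) • (n : ℝ) ^ x₀ • a n := by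
    rw [smul_smul, ← rpow_add' n.cast_nonneg (by simpa using hx.ne'), sub_add_cancel]
  calc ‖∑ n ∈ Ico 1 ⌈exp t⌉₊, (n : ℝ) ^ x • a n‖
      = ‖∑ n ∈ Ico 1 (N + 1), (n : ℝ) ^ (x - x₀) • (n : ℝ) ^ x₀ • a n‖ := by
        simp only [hN, hsplit]
    _ ≤ C * x₀ / x * (N : ℝ) ^ x := norm_sum_Ico_rpow_smul_le hx hxx₀ hC hpartial N
    _ ≤ C * x₀ / x * exp (x * t) := by
        rw [mul_comm x, exp_mul]
        gcongr
        exact div_nonneg (mul_nonneg hC (hx.le.trans hxx₀)) hx.le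

theorem stmt_17 {X : Type*} [NormedAddCommGroup X] [NormedSpace ℂ X] [CompleteSpace X]
    (a : ℕ → X) (x₀ C : ℝ) (hx₀ : 0 < x₀) (hC : 0 < C)
    (hbound : ∀ t : ℝ, 0 ≤ t →
      ‖Real.exp (-x₀ * t) •
          ∑ n ∈ (Finset.Icc 1 ⌊Real.exp t⌋₊).filter (fun n : ℕ => Real.log (n : ℝ) < t),
            ((n : ℝ) ^ x₀) • a n‖ ≤ C) :
    ∀ x : ℝ, 0 < x → x ≤ x₀ → ∀ t : ℝ, 0 ≤ t →
      ‖Real.exp (-x * t) •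
          ∑ n ∈ (Finset.Icc 1 ⌊Real.exp t⌋₊).filter (fun n : ℕ => Real.log (n : ℝ) < t),
            ((n : ℝ) ^ x) • a n‖
        ≤ C * x₀ / x :=
  stmt_17_general a x₀ C hbound
end
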